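/- arXiv:hep-th/9711064 — 5 statements merged into one kernel-verified Lean document; each statement's English description precedes it below -/
import Mathlib

section
/- Let T : g^{n+1} → ℝ and T' : g^{m+1} → ℝ be invariant multilinear forms on g, let B be an invariant symmetric bilinear form on g whose restriction to h is nondegenerate, let (e_β) be a basis of h and (e^β) the basis of h dual to it with respect to B (i.e. B(e_β, e^γ) = δ_β^γ). Define the multilinear form S : k^n × k^m → ℝ by S(x_1,…,x_n; y_1,…,y_m) = ∑_β T(x_1,…,x_n, e_β)·T'(e^β, y_1,…,y_m) (contraction of the last index of T with the first index of T' over the subalgebra h). Then S is h-invariant: for every z ∈ h and all x_1,…,x_n, y_1,…,y_m ∈ k one has ∑_{s=1}^n S(x_1,…,⁅z,x_s⁆,…,x_n; y_1,…,y_m) + ∑_{t=1}^m S(x_1,…,x_n; y_1,…,⁅z,y_t⁆,…,y_m) = 0 (note that ⁅z,x_s⁆ and ⁅z,y_t⁆ lie in k by reductivity, so all arguments stay in k). -/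
open Finset

/-!
Invariance of `T` and `T'` moves the bracket with `z` off the free slots onto the contracted
one: the sum becomes `-∑ β, (T(x, ⁅z, e β⁆) T'(e' β, y) + T(x, e β) T'(⁅z, e' β⁆, y))`. This
vanishes because the Casimir tensor `∑ β, e β ⊗ e' β` of `h` is `ad z`-invariant: expanding
`⁅z, e β⁆` in the basis `e` and `⁅z, e' γ⁆` in `e'` (a basis too, being dual to `e`), the two
coefficient matrices are negatives of each other since `ad z` is `B`-skew.
-/

namespace Module.Basis

variable {K V ι : Type*} [Field K] [AddCommGroup V] [Module K V] [Fintype ι] [DecidableEq ι]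
  {B : V →ₗ[K] V →ₗ[K] K} {e : Basis ι K V} {e' : ι → V}

theorem apply_dual_eq_repr (hdual : ∀ β γ, B (e β) (e' γ) = if β = γ then 1 else 0)
    (a : V) (γ : ι) : B a (e' γ) = e.repr a γ := by
  conv_lhs => rw [← e.sum_repr a, map_sum, LinearMap.sum_apply]
  simp [hdual]

theorem sum_apply_dual_smul (hdual : ∀ β γ, B (e β) (e' γ) = if β = γ then 1 else 0)
    (a : V) : ∑ γ, B a (e' γ) • e γ = a := by
  simp only [apply_dual_eq_repr hdual, e.sum_repr]

theorem linearIndependent_dual (hdual : ∀ β γ, B (e β) (e' γ) = if β = γ then 1 else 0) :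
    LinearIndependent K e' := by
  refine Fintype.linearIndependent_iff.mpr fun c hc γ => ?_
  simpa [hdual] using congrArg (B (e γ)) hc

noncomputable def ofDualFamily (hdual : ∀ β γ, B (e β) (e' γ) = if β = γ then 1 else 0) :
    Basis ι K V :=
  haveI := Module.Finite.of_basis e
  basisOfLinearIndependentOfCardEqFinrank' e' (linearIndependent_dual hdual)
    (finrank_eq_card_basis e).symm

@[simp]
theorem coe_ofDualFamily (hdual : ∀ β γ, B (e β) (e' γ) = if β = γ then 1 else 0) :
    ⇑(ofDualFamily hdual) = e' := by
  simp [ofDualFamily]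

theorem sum_apply_smul_dual (hdual : ∀ β γ, B (e β) (e' γ) = if β = γ then 1 else 0)
    (a : V) : ∑ β, B (e β) a • e' β = a := by
  have hdual' : ∀ γ β, B.flip (ofDualFamily hdual γ) (e β) = if γ = β then 1 else 0 := by
    simp [hdual, eq_comm]
  simpa using sum_apply_dual_smul hdual' a

end Module.Basis
/-- `Φ` stands for an arbitrary linear functional on `L ⊗ L`, so this is the `ad z`-invariance of
the Casimir tensor `∑ β, e β ⊗ e' β`. -/
theorem sum_bilin_casimir_lie_eq_zero {K L M ι : Type*} [Field K] [LieRing L]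
    [LieAlgebra K L] [AddCommGroup M] [Module K M] [Fintype ι] [DecidableEq ι]
    {B : L →ₗ[K] L →ₗ[K] K} {z : L} (hB : ∀ a b, B ⁅z, a⁆ b + B a ⁅z, b⁆ = 0)
    {e : Module.Basis ι K L} {e' : ι → L} (hdual : ∀ β γ, B (e β) (e' γ) = if β = γ then 1 else 0)
    (Φ : L →ₗ[K] L →ₗ[K] M) :
    ∑ β, (Φ ⁅z, e β⁆ (e' β) + Φ (e β) ⁅z, e' β⁆) = 0 := by
  set c : ι → ι → K := fun β γ => B ⁅z, e β⁆ (e' γ) with hc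
  have lie_basis : ∀ β, ⁅z, e β⁆ = ∑ γ, c β γ • e γ := fun β =>
    (e.sum_apply_dual_smul hdual _).symm
  have lie_dual : ∀ γ, ⁅z, e' γ⁆ = -∑ β, c β γ • e' β := fun γ => by
    conv_lhs => rw [← e.sum_apply_smul_dual hdual ⁅z, e' γ⁆]
    simp only [hc, eq_neg_of_add_eq_zero_right (hB _ _), neg_smul, sum_neg_distrib]
  simp only [lie_basis, lie_dual, map_sum, map_neg, map_smul, LinearMap.sum_apply,
    LinearMap.smul_apply, sum_neg_distrib, sum_add_distrib]
  rw [sum_comm, add_neg_cancel]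

theorem sum_snoc_update_lie_eq_neg {L M : Type*} [Bracket L L] [AddCommGroup M] {n : ℕ}
    {F : (Fin (n + 1) → L) → M} {z : L} (hF : ∀ v, ∑ s, F (Function.update v s ⁅z, v s⁆) = 0)
    (x : Fin n → L) (a : L) :
    ∑ s : Fin n, F (Fin.snoc (Function.update x s ⁅z, x s⁆) a) = -F (Fin.snoc x ⁅z, a⁆) := by
  have h := hF (Fin.snoc x a)
  simp only [Fin.sum_univ_castSucc, Fin.snoc_castSucc, ← Fin.snoc_update, Fin.snoc_last,
    Fin.update_snoc_last] at h
  exact eq_neg_of_add_eq_zero_left h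

theorem sum_cons_update_lie_eq_neg {L M : Type*} [Bracket L L] [AddCommGroup M] {m : ℕ}
    {F : (Fin (m + 1) → L) → M} {z : L} (hF : ∀ v, ∑ s, F (Function.update v s ⁅z, v s⁆) = 0)
    (a : L) (y : Fin m → L) :
    ∑ t : Fin m, F (Fin.cons a (Function.update y t ⁅z, y t⁆)) = -F (Fin.cons ⁅z, a⁆ y) := by
  have h := hF (Fin.cons a y)
  simp only [Fin.sum_univ_succ, Fin.cons_succ, ← Fin.cons_update, Fin.cons_zero,
    Fin.update_cons_zero] at h
  exact eq_neg_of_add_eq_zero_right h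

theorem contraction_over_subalgebra_h_invariant_general
    {g : Type*} [LieRing g] [LieAlgebra ℝ g]
    (h : LieSubalgebra ℝ g)
    (n m : ℕ)
    (T : MultilinearMap ℝ (fun _ : Fin (n+1) => g) ℝ)
    (T' : MultilinearMap ℝ (fun _ : Fin (m+1) => g) ℝ)
    (hT : ∀ (y : g) (v : Fin (n+1) → g),
      ∑ s, T (Function.update v s ⁅y, v s⁆) = 0)
    (hT' : ∀ (y : g) (v : Fin (m+1) → g),
      ∑ s, T' (Function.update v s ⁅y, v s⁆) = 0)
    (B : g →ₗ[ℝ] g →ₗ[ℝ] ℝ)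
    (hBinv : ∀ z x y : g, B ⁅z, x⁆ y + B x ⁅z, y⁆ = 0)
    (ι : Type*) [Fintype ι] [DecidableEq ι]
    (e : Module.Basis ι ℝ h) (e' : ι → h)
    (hdual : ∀ β γ, B (e β : g) (e' γ : g) = if β = γ then 1 else 0)
    (z : g) (hz : z ∈ h)
    (x : Fin n → g)
    (y : Fin m → g) :
    (∑ s : Fin n, ∑ β : ι,
        T (Fin.snoc (Function.update x s ⁅z, x s⁆) (e β : g)) *
          T' (Fin.cons (e' β : g) y)) +
    (∑ t : Fin m, ∑ β : ι,
        T (Fin.snoc x (e β : g)) *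
          T' (Fin.cons (e' β : g) (Function.update y t ⁅z, y t⁆))) = 0 := by
  -- `Φ a b = T (x, a) * T' (b, y)`
  let Φ : h →ₗ[ℝ] h →ₗ[ℝ] ℝ := (LinearMap.mul ℝ ℝ).compl₁₂
    ((T.toLinearMap (Fin.snoc x 0) (Fin.last n)).comp (h.incl : h →ₗ[ℝ] g))
    ((T'.toLinearMap (Fin.cons 0 y) 0).comp (h.incl : h →ₗ[ℝ] g))
  have casimir := sum_bilin_casimir_lie_eq_zero (z := ⟨z, hz⟩)
    (B := B.compl₁₂ (h.incl : h →ₗ[ℝ] g) h.incl) (fun a b => hBinv z a b) hdual Φ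
  simp only [Φ, LinearMap.compl₁₂_apply, LinearMap.comp_apply, MultilinearMap.toLinearMap_apply,
    Fin.update_snoc_last, Fin.update_cons_zero, LieHom.coe_toLinearMap, LieSubalgebra.coe_incl,
    LieSubalgebra.coe_bracket, LinearMap.mul_apply'] at casimir
  rw [sum_comm (γ := Fin n), sum_comm (γ := Fin m)]
  simp only [← sum_mul, ← mul_sum, sum_snoc_update_lie_eq_neg (hT z),
    sum_cons_update_lie_eq_neg (hT' z), neg_mul, mul_neg, ← sum_add_distrib, ← neg_add]
  rw [sum_neg_distrib, casimir, neg_zero]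

/-- Let `g = h ⊕ k` be a reductive decomposition of a
finite-dimensional real Lie algebra `g` with respect to the Lie subalgebra `h`.
Let `T`, `T'` be invariant multilinear forms on `g` of `n+1` resp. `m+1`
arguments, `B` an invariant symmetric bilinear form whose restriction to `h`
is nondegenerate, `e` a basis of `h` and `e'` the `B`-dual basis of `h`.
Then the contraction
`S(x₁,…,xₙ; y₁,…,y_m) = ∑ β, T(x₁,…,xₙ,e β) * T'(e' β, y₁,…,y_m)`
is `h`-invariant on `k`-arguments. -/
theorem contraction_over_subalgebra_h_invariant
    {g : Type*} [LieRing g] [LieAlgebra ℝ g] [FiniteDimensional ℝ g]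
    (h : LieSubalgebra ℝ g) (k : Submodule ℝ g)
    (hcompl : IsCompl h.toSubmodule k)
    (hred : ∀ z ∈ h, ∀ x ∈ k, ⁅z, x⁆ ∈ k)
    (n m : ℕ)
    (T : MultilinearMap ℝ (fun _ : Fin (n+1) => g) ℝ)
    (T' : MultilinearMap ℝ (fun _ : Fin (m+1) => g) ℝ)
    (hT : ∀ (y : g) (v : Fin (n+1) → g),
      ∑ s, T (Function.update v s ⁅y, v s⁆) = 0)
    (hT' : ∀ (y : g) (v : Fin (m+1) → g),
      ∑ s, T' (Function.update v s ⁅y, v s⁆) = 0)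
    (B : g →ₗ[ℝ] g →ₗ[ℝ] ℝ)
    (hBsymm : ∀ x y, B x y = B y x)
    (hBinv : ∀ z x y : g, B ⁅z, x⁆ y + B x ⁅z, y⁆ = 0)
    (hBnd : ∀ x ∈ h, (∀ y ∈ h, B x y = 0) → x = 0)
    (ι : Type*) [Fintype ι] [DecidableEq ι]
    (e : Module.Basis ι ℝ h) (e' : ι → h)
    (hdual : ∀ β γ, B (e β : g) (e' γ : g) = if β = γ then 1 else 0)
    (z : g) (hz : z ∈ h)
    (x : Fin n → g) (hx : ∀ i, x i ∈ k)
    (y : Fin m → g) (hy : ∀ i, y i ∈ k) :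
    (∑ s : Fin n, ∑ β : ι,
        T (Fin.snoc (Function.update x s ⁅z, x s⁆) (e β : g)) *
          T' (Fin.cons (e' β : g) y)) +
    (∑ t : Fin m, ∑ β : ι,
        T (Fin.snoc x (e β : g)) *
          T' (Fin.cons (e' β : g) (Function.update y t ⁅z, y t⁆))) = 0 :=
  contraction_over_subalgebra_h_invariant_general h n m T T' hT hT' B hBinv ι e e' hdual z hz x y
end

section
/- Let T : g^{n+1} → ℝ and T' : g^{m+1} → ℝ be invariant multilinear forms on g, let B be a nondegenerate invariant symmetric bilinear form on g, let (e_i) be a basis of g and (e^i) the basis of g dual to it with respect to B (i.e. B(e_i, e^j) = δ_i^j). Define the multilinear form S : k^n × k^m → ℝ by S(x_1,…,x_n; y_1,…,y_m) = ∑_i T(x_1,…,x_n, e_i)·T'(e^i, y_1,…,y_m) (contraction of the last index of T with the first index of T' over all of g). Then S is h-invariant: for every z ∈ h and all x_1,…,x_n, y_1,…,y_m ∈ k one has ∑_{s=1}^n S(x_1,…,⁅z,x_s⁆,…,x_n; y_1,…,y_m) + ∑_{t=1}^m S(x_1,…,x_n; y_1,…,⁅z,y_t⁆,…,y_m) = 0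 (note that ⁅z,x_s⁆ and ⁅z,y_t⁆ lie in k by reductivity, so all arguments stay in k). -/
/-!
Invariance of `T` moves the derivation `ad z` off the first `n` slots and onto the contracted
slot, turning the two sums into `-∑ T(x, ⁅z, eᵢ⁆) T'(e'ᵢ, y)` and `-∑ T(x, eᵢ) T'(⁅z, e'ᵢ⁆, y)`.
These cancel because the Casimir tensor `∑ eᵢ ⊗ e'ᵢ` is `ad`-invariant, which is the
invariance of `B` written in the dual bases.
-/

open Finset

namespace MultilinearMap

variable {R L N : Type*} [CommRing R] [LieRing L] [LieAlgebra R L] [AddCommGroup N] [Module R N]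

def IsLieInvariant {ι : Type*} [Fintype ι] [DecidableEq ι]
    (T : MultilinearMap R (fun _ : ι => L) N) : Prop :=
  ∀ (z : L) (v : ι → L), ∑ s, T (Function.update v s ⁅z, v s⁆) = 0

variable {n : ℕ} {T : MultilinearMap R (fun _ : Fin (n + 1) => L) N}

theorem IsLieInvariant.sum_update_snoc (hT : T.IsLieInvariant) (z : L) (x : Fin n → L) (u : L) :
    ∑ s, T (Fin.snoc (Function.update x s ⁅z, x s⁆) u) = -T (Fin.snoc x ⁅z, u⁆) := by
  have h := hT z (Fin.snoc x u)
  rw [Fin.sum_univ_castSucc] at h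
  simp only [Fin.snoc_castSucc, Fin.snoc_last, Fin.update_snoc_last, ← Fin.snoc_update] at h
  exact eq_neg_of_add_eq_zero_left h

theorem IsLieInvariant.sum_update_cons (hT : T.IsLieInvariant) (z : L) (u : L) (y : Fin n → L) :
    ∑ s, T (Fin.cons u (Function.update y s ⁅z, y s⁆)) = -T (Fin.cons ⁅z, u⁆ y) := by
  have h := hT z (Fin.cons u y)
  rw [Fin.sum_univ_succ] at h
  simp only [Fin.cons_zero, Fin.cons_succ, Fin.update_cons_zero, ← Fin.cons_update] at h
  exact eq_neg_of_add_eq_zero_right h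

end MultilinearMap

section DualBases

variable {R L ι : Type*} [CommRing R] [AddCommGroup L] [Module R L] [Fintype ι] [DecidableEq ι]
  {B : L →ₗ[R] L →ₗ[R] R} {e : Module.Basis ι R L} {e' : ι → L}

theorem Module.Basis.sum_apply_dual_smul_s1 (hdual : ∀ i j, B (e i) (e' j) = if i = j then 1 else 0)
    (u : L) : ∑ i, B u (e' i) • e i = u := by
  have hrepr : ∀ i, e.coord i = B.flip (e' i) :=
    fun i => e.ext fun j => by simp [hdual, Finsupp.single_apply, eq_comm]
  conv_rhs => rw [← e.sum_repr u]
  exact sum_congr rfl fun i _ => by rw [← e.coord_apply, hrepr, LinearMap.flip_apply]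

theorem Module.Basis.sum_apply_smul_dual_s1 (hdual : ∀ i j, B (e i) (e' j) = if i = j then 1 else 0)
    (hsymm : ∀ x y, B x y = B y x) (hnd : ∀ x, (∀ y, B x y = 0) → x = 0) (u : L) :
    ∑ i, B (e i) u • e' i = u := by
  have hbasis : ∀ j, B (e j) (∑ i, B (e i) u • e' i) = B (e j) u := fun j => by
    simp [map_sum, hdual]
  refine sub_eq_zero.mp (hnd _ fun v => ?_)
  rw [hsymm, ← e.sum_apply_dual_smul_s1 hdual v, map_sum, LinearMap.sum_apply]
  exact sum_eq_zero fun j _ => by simp [hbasis]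

end DualBases

section Casimir

variable {R L ι : Type*} [CommRing R] [LieRing L] [LieAlgebra R L] [Fintype ι] [DecidableEq ι]
  {B : L →ₗ[R] L →ₗ[R] R} {e : Module.Basis ι R L} {e' : ι → L}

theorem sum_lie_basis_mul_add_sum_mul_lie_dual_eq_zero
    (hdual : ∀ i j, B (e i) (e' j) = if i = j then 1 else 0)
    (hsymm : ∀ x y, B x y = B y x) (hnd : ∀ x, (∀ y, B x y = 0) → x = 0)
    (hinv : ∀ z x y : L, B ⁅z, x⁆ y + B x ⁅z, y⁆ = 0) (a b : L →ₗ[R] R) (z : L) :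
    ∑ i, a ⁅z, e i⁆ * b (e' i) + ∑ i, a (e i) * b ⁅z, e' i⁆ = 0 := by
  have expand_a : ∀ u, a u = ∑ j, B u (e' j) * a (e j) := fun u => by
    conv_lhs => rw [← e.sum_apply_dual_smul_s1 hdual u]
    simp [map_sum]
  have expand_b : ∀ u, b u = ∑ j, B (e j) u * b (e' j) := fun u => by
    conv_lhs => rw [← e.sum_apply_smul_dual_s1 hdual hsymm hnd u]
    simp [map_sum]
  simp only [expand_a ⁅z, _⁆, expand_b ⁅z, _⁆, sum_mul, mul_sum]
  rw [sum_comm (γ := ι) (f := fun i j => a (e i) * (B (e j) ⁅z, e' i⁆ * b (e' j))),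
    ← sum_add_distrib]
  refine sum_eq_zero fun i _ => ?_
  rw [← sum_add_distrib]
  refine sum_eq_zero fun j _ => ?_
  linear_combination (a (e j) * b (e' i)) * hinv z (e i) (e' j)

end Casimir

theorem contraction_over_algebra_h_invariant_general
    {g : Type*} [LieRing g] [LieAlgebra ℝ g]
    (n m : ℕ)
    (T : MultilinearMap ℝ (fun _ : Fin (n+1) => g) ℝ)
    (T' : MultilinearMap ℝ (fun _ : Fin (m+1) => g) ℝ)
    (hT : ∀ (y : g) (v : Fin (n+1) → g),
      ∑ s, T (Function.update v s ⁅y, v s⁆) = 0)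
    (hT' : ∀ (y : g) (v : Fin (m+1) → g),
      ∑ s, T' (Function.update v s ⁅y, v s⁆) = 0)
    (B : g →ₗ[ℝ] g →ₗ[ℝ] ℝ)
    (hBsymm : ∀ x y, B x y = B y x)
    (hBinv : ∀ z x y : g, B ⁅z, x⁆ y + B x ⁅z, y⁆ = 0)
    (hBnd : ∀ x : g, (∀ y : g, B x y = 0) → x = 0)
    (ι : Type*) [Fintype ι] [DecidableEq ι]
    (e : Module.Basis ι ℝ g) (e' : ι → g)
    (hdual : ∀ i j, B (e i) (e' j) = if i = j then 1 else 0)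
    (z : g)
    (x : Fin n → g)
    (y : Fin m → g) :
    (∑ s : Fin n, ∑ i : ι,
        T (Fin.snoc (Function.update x s ⁅z, x s⁆) (e i)) *
          T' (Fin.cons (e' i) y)) +
    (∑ t : Fin m, ∑ i : ι,
        T (Fin.snoc x (e i)) *
          T' (Fin.cons (e' i) (Function.update y t ⁅z, y t⁆))) = 0 := by
  rw [sum_comm (γ := Fin n), sum_comm (γ := Fin m)]
  simp only [← sum_mul, ← mul_sum, MultilinearMap.IsLieInvariant.sum_update_snoc hT,
    MultilinearMap.IsLieInvariant.sum_update_cons hT', neg_mul, mul_neg, sum_neg_distrib,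
    ← neg_add, neg_eq_zero]
  have hcasimir := sum_lie_basis_mul_add_sum_mul_lie_dual_eq_zero hdual hBsymm hBnd hBinv
    (T.toLinearMap (Fin.snoc x 0) (Fin.last n)) (T'.toLinearMap (Fin.cons 0 y) 0) z
  simpa only [MultilinearMap.toLinearMap_apply, Fin.update_snoc_last, Fin.update_cons_zero]
    using hcasimir

/-- Let `g = h ⊕ k` be a reductive decomposition of a
finite-dimensional real Lie algebra `g` with respect to the Lie subalgebra `h`.
Let `T`, `T'` be invariant multilinear forms on `g` of `n+1` resp. `m+1`
arguments, `B` a nondegenerate invariant symmetric bilinear form on `g`,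
`e` a basis of `g` and `e'` the `B`-dual basis of `g`.  Then the contraction
`S(x₁,…,xₙ; y₁,…,y_m) = ∑ i, T(x₁,…,xₙ,e i) * T'(e' i, y₁,…,y_m)`
is `h`-invariant on `k`-arguments. -/
theorem contraction_over_algebra_h_invariant
    {g : Type*} [LieRing g] [LieAlgebra ℝ g] [FiniteDimensional ℝ g]
    (h : LieSubalgebra ℝ g) (k : Submodule ℝ g)
    (hcompl : IsCompl h.toSubmodule k)
    (hred : ∀ z ∈ h, ∀ x ∈ k, ⁅z, x⁆ ∈ k)
    (n m : ℕ)
    (T : MultilinearMap ℝ (fun _ : Fin (n+1) => g) ℝ)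
    (T' : MultilinearMap ℝ (fun _ : Fin (m+1) => g) ℝ)
    (hT : ∀ (y : g) (v : Fin (n+1) → g),
      ∑ s, T (Function.update v s ⁅y, v s⁆) = 0)
    (hT' : ∀ (y : g) (v : Fin (m+1) → g),
      ∑ s, T' (Function.update v s ⁅y, v s⁆) = 0)
    (B : g →ₗ[ℝ] g →ₗ[ℝ] ℝ)
    (hBsymm : ∀ x y, B x y = B y x)
    (hBinv : ∀ z x y : g, B ⁅z, x⁆ y + B x ⁅z, y⁆ = 0)
    (hBnd : ∀ x : g, (∀ y : g, B x y = 0) → x = 0)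
    (ι : Type*) [Fintype ι] [DecidableEq ι]
    (e : Module.Basis ι ℝ g) (e' : ι → g)
    (hdual : ∀ i j, B (e i) (e' j) = if i = j then 1 else 0)
    (z : g) (hz : z ∈ h)
    (x : Fin n → g) (hx : ∀ i, x i ∈ k)
    (y : Fin m → g) (hy : ∀ i, y i ∈ k) :
    (∑ s : Fin n, ∑ i : ι,
        T (Fin.snoc (Function.update x s ⁅z, x s⁆) (e i)) *
          T' (Fin.cons (e' i) y)) +
    (∑ t : Fin m, ∑ i : ι,
        T (Fin.snoc x (e i)) *
          T' (Fin.cons (e' i) (Function.update y t ⁅z, y t⁆))) = 0 :=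
  contraction_over_algebra_h_invariant_general n m T T' hT hT' B hBsymm hBinv hBnd ι e e' hdual z x
    y
end

section
/- For every 1 ≤ p ≤ m, the form Ω_(p) is h-invariant: for every z ∈ h and all x_1, …, x_{2m−1} ∈ k one has ∑_{s=1}^{2m−1} Ω_(p)(x_1, …, ⁅z, x_s⁆, …, x_{2m−1}) = 0 (note that each ⁅z, x_s⁆ lies in k by reductivity). -/
open Finset

/-- The `i`-th argument fed to the symmetric invariant form `K` in the
(2m−1)-form `Ω_(p)`:  the first `p−1` entries are brackets projected to the
subalgebra by `πh`, the next `m−p` entries are unprojected brackets, and the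
last entry is `x (σ (2m−2))` (0-indexed). -/
def omegaArg {g : Type*} [LieRing g] [LieAlgebra ℝ g] (m p : ℕ) (hm : 1 ≤ m)
    (πh : g →ₗ[ℝ] g) (x : Fin (2*m-1) → g) (σ : Equiv.Perm (Fin (2*m-1)))
    (i : Fin m) : g :=
  if h : (i : ℕ) < m - 1 then
    (if (i : ℕ) < p - 1 then
      πh ⁅x (σ ⟨2*(i : ℕ), by omega⟩), x (σ ⟨2*(i : ℕ)+1, by omega⟩)⁆
    else
      ⁅x (σ ⟨2*(i : ℕ), by omega⟩), x (σ ⟨2*(i : ℕ)+1, by omega⟩)⁆)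
  else
    x (σ ⟨2*m-2, by omega⟩)

/-- The alternating (2m−1)-multilinear form `Ω_(p)` (evaluated on tuples of
elements of `g`; in the applications the arguments lie in the complement `k`). -/
def OmegaP {g : Type*} [LieRing g] [LieAlgebra ℝ g] (m p : ℕ) (hm : 1 ≤ m)
    (πh : g →ₗ[ℝ] g) (K : MultilinearMap ℝ (fun _ : Fin m => g) ℝ)
    (x : Fin (2*m-1) → g) : ℝ :=
  ∑ σ : Equiv.Perm (Fin (2*m-1)),
    ((Equiv.Perm.sign σ : ℤ) : ℝ) * K (omegaArg m p hm πh x σ)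

def argA {g : Type*} [LieRing g] [LieAlgebra ℝ g] (m p : ℕ) (hm : 1 ≤ m)
    (πh : g →ₗ[ℝ] g) (w : Fin (2*m-1) → g) (i : Fin m) : g :=
  if h : (i : ℕ) < m - 1 then
    (if (i : ℕ) < p - 1 then
      πh ⁅w ⟨2*(i : ℕ), by omega⟩, w ⟨2*(i : ℕ)+1, by omega⟩⁆
    else
      ⁅w ⟨2*(i : ℕ), by omega⟩, w ⟨2*(i : ℕ)+1, by omega⟩⁆)
  else
    w ⟨2*m-2, by omega⟩

lemma argA_update_ne {g : Type*} [LieRing g] [LieAlgebra ℝ g] (m p : ℕ) (hm : 1 ≤ m)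
    (πh : g →ₗ[ℝ] g) (w : Fin (2*m-1) → g) (j : Fin (2*m-1)) (v : g) (i : Fin m)
    (h1 : (i : ℕ) < m-1 → (j : ℕ) ≠ 2*(i:ℕ) ∧ (j : ℕ) ≠ 2*(i:ℕ)+1)
    (h2 : ¬ ((i : ℕ) < m-1) → (j : ℕ) ≠ 2*m-2) :
    argA m p hm πh (Function.update w j v) i = argA m p hm πh w i := by
  unfold argA
  split_ifs with h hp
  · rw [Function.update_of_ne (by simp [Fin.ext_iff]; omega) _ w,
      Function.update_of_ne (by simp [Fin.ext_iff]; exact fun hh => ((h1 h).2 hh.symm)) _ w]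
  · rw [Function.update_of_ne (by simp [Fin.ext_iff]; exact fun hh => ((h1 h).1 hh.symm)) _ w,
      Function.update_of_ne (by simp [Fin.ext_iff]; exact fun hh => ((h1 h).2 hh.symm)) _ w]
  · rw [Function.update_of_ne (by simp [Fin.ext_iff]; exact fun hh => (h2 h hh.symm)) _ w]

lemma argA_update_left {g : Type*} [LieRing g] [LieAlgebra ℝ g] (m p : ℕ) (hm : 1 ≤ m)
    (πh : g →ₗ[ℝ] g) (w : Fin (2*m-1) → g) (i : ℕ) (hi : i < m-1) (v : g) :
    argA m p hm πh (Function.update w ⟨2*i, by omega⟩ v) =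
    Function.update (argA m p hm πh w) ⟨i, by omega⟩
      (if i < p-1 then πh ⁅v, w ⟨2*i+1, by omega⟩⁆ else ⁅v, w ⟨2*i+1, by omega⟩⁆) := by
  funext i'
  by_cases hii : i' = (⟨i, by omega⟩ : Fin m)
  · subst hii
    rw [Function.update_self]
    unfold argA
    rw [dif_pos (by simpa using hi)]
    have e1 : Function.update w ⟨2*i, by omega⟩ v ⟨2*i, by omega⟩ = v :=
      Function.update_self _ _ _
    have e2 : Function.update w ⟨2*i, by omega⟩ v ⟨2*i+1, by omega⟩ = w ⟨2*i+1, by omega⟩ :=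
      Function.update_of_ne (by simp [Fin.ext_iff]) _ w
    rw [e1, e2]
  · rw [Function.update_of_ne hii]
    refine argA_update_ne m p hm πh w _ v i' (fun hlt => ?_) (fun hge => ?_)
    · have : (i' : ℕ) ≠ i := by simpa [Fin.ext_iff] using hii
      constructor <;> simp <;> omega
    · simp; omega

lemma argA_update_right {g : Type*} [LieRing g] [LieAlgebra ℝ g] (m p : ℕ) (hm : 1 ≤ m)
    (πh : g →ₗ[ℝ] g) (w : Fin (2*m-1) → g) (i : ℕ) (hi : i < m-1) (v : g) :
    argA m p hm πh (Function.update w ⟨2*i+1, by omega⟩ v) =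
    Function.update (argA m p hm πh w) ⟨i, by omega⟩
      (if i < p-1 then πh ⁅w ⟨2*i, by omega⟩, v⁆ else ⁅w ⟨2*i, by omega⟩, v⁆) := by
  funext i'
  by_cases hii : i' = (⟨i, by omega⟩ : Fin m)
  · subst hii
    rw [Function.update_self]
    unfold argA
    rw [dif_pos (by simpa using hi)]
    have e1 : Function.update w ⟨2*i+1, by omega⟩ v ⟨2*i+1, by omega⟩ = v :=
      Function.update_self _ _ _
    have e2 : Function.update w ⟨2*i+1, by omega⟩ v ⟨2*i, by omega⟩ = w ⟨2*i, by omega⟩ :=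
      Function.update_of_ne (by simp [Fin.ext_iff]) _ w
    rw [e1, e2]
  · rw [Function.update_of_ne hii]
    refine argA_update_ne m p hm πh w _ v i' (fun hlt => ?_) (fun hge => ?_)
    · have : (i' : ℕ) ≠ i := by simpa [Fin.ext_iff] using hii
      constructor <;> simp <;> omega
    · simp; omega

lemma argA_update_last {g : Type*} [LieRing g] [LieAlgebra ℝ g] (m p : ℕ) (hm : 1 ≤ m)
    (πh : g →ₗ[ℝ] g) (w : Fin (2*m-1) → g) (v : g) :
    argA m p hm πh (Function.update w ⟨2*m-2, by omega⟩ v) =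
    Function.update (argA m p hm πh w) ⟨m-1, by omega⟩ v := by
  funext i'
  by_cases hii : i' = (⟨m-1, by omega⟩ : Fin m)
  · subst hii
    rw [Function.update_self]
    unfold argA
    rw [dif_neg (by simp)]
    rw [Function.update_self]
  · rw [Function.update_of_ne hii]
    have : (i' : ℕ) ≠ m-1 := by simpa [Fin.ext_iff] using hii
    have hlt : (i' : ℕ) < m-1 := by have := i'.isLt; omega
    refine argA_update_ne m p hm πh w _ v i' (fun _ => ?_) (fun hge => ?_)
    · constructor <;> simp <;> omega
    · omega

lemma sum_range_pair (G : ℕ → ℝ) (n : ℕ) :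
    ∑ t ∈ range (2*n), G t = ∑ i ∈ range n, (G (2*i) + G (2*i+1)) := by
  induction n with
  | zero => simp
  | succ n ih =>
      rw [show 2*(n+1) = 2*n+1+1 by ring, sum_range_succ, sum_range_succ, ih, sum_range_succ]
      ring

lemma key_sum {g : Type*} [LieRing g] [LieAlgebra ℝ g] (m p : ℕ) (hm : 1 ≤ m)
    (πh : g →ₗ[ℝ] g) (K : MultilinearMap ℝ (fun _ : Fin m => g) ℝ)
    (hKinv : ∀ (y : g) (v : Fin m → g),
      ∑ s, K (Function.update v s ⁅y, v s⁆) = 0)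
    (z : g) (hcomm : ∀ a : g, πh ⁅z, a⁆ = ⁅z, πh a⁆)
    (w : Fin (2*m-1) → g) :
    ∑ t : Fin (2*m-1), K (argA m p hm πh (Function.update w t ⁅z, w t⁆)) = 0 := by
  classical
  set A := argA m p hm πh w with hA
  set G : ℕ → ℝ := fun t =>
    if ht : t < 2*m-1 then
      K (argA m p hm πh (Function.update w ⟨t, ht⟩ ⁅z, w ⟨t, ht⟩⁆)) else 0 with hG
  set H : ℕ → ℝ := fun i =>
    if hi : i < m then K (Function.update A ⟨i, hi⟩ ⁅z, A ⟨i, hi⟩⁆) else 0 with hH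
  have hL : ∑ t : Fin (2*m-1), K (argA m p hm πh (Function.update w t ⁅z, w t⁆))
      = ∑ t ∈ range (2*m-1), G t := by
    rw [← Fin.sum_univ_eq_sum_range]
    refine Finset.sum_congr rfl fun t _ => ?_
    rw [hG]
    simp only [t.isLt, dif_pos, Fin.eta]
  have hR : ∑ i ∈ range m, H i = 0 := by
    rw [← Fin.sum_univ_eq_sum_range]
    have : ∀ i : Fin m, H (i : ℕ) = K (Function.update A i ⁅z, A i⁆) := by
      intro i; rw [hH]; simp only [i.isLt, dif_pos, Fin.eta]
    rw [Finset.sum_congr rfl fun i _ => this i]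
    exact hKinv z A
  rw [hL]
  rw [show (2*m-1 : ℕ) = 2*(m-1)+1 by omega, sum_range_succ, sum_range_pair]
  have hlast : G (2*(m-1)) = H (m-1) := by
    rw [hG, hH]
    beta_reduce
    rw [dif_pos (by omega : 2*(m-1) < 2*m-1), dif_pos (by omega : m-1 < m)]
    have hfin : (⟨2*(m-1), by omega⟩ : Fin (2*m-1)) = ⟨2*m-2, by omega⟩ := by
      simp [Fin.ext_iff]; omega
    rw [hfin, argA_update_last m p hm πh w, hA]
    congr 2
    unfold argA
    rw [dif_neg (by simp)]
  have hpairs : ∀ i ∈ range (m-1), G (2*i) + G (2*i+1) = H i := by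
    intro i hi
    rw [mem_range] at hi
    rw [hG, hH]
    beta_reduce
    rw [dif_pos (by omega : 2*i < 2*m-1), dif_pos (by omega : 2*i+1 < 2*m-1),
      dif_pos (by omega : i < m)]
    rw [argA_update_left m p hm πh w i hi, argA_update_right m p hm πh w i hi]
    have hAi : A ⟨i, by omega⟩ = if i < p-1 then πh ⁅w ⟨2*i, by omega⟩, w ⟨2*i+1, by omega⟩⁆
        else ⁅w ⟨2*i, by omega⟩, w ⟨2*i+1, by omega⟩⁆ := by
      rw [hA]; unfold argA; rw [dif_pos (by simpa using hi)]
    rw [← hA, ← K.map_update_add, hAi]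
    congr 2
    by_cases hip : i < p-1
    · simp only [if_pos hip]
      rw [← map_add, ← leibniz_lie, hcomm]
    · simp only [if_neg hip]
      rw [← leibniz_lie]
  rw [Finset.sum_congr rfl hpairs, hlast, ← sum_range_succ,
    show (m-1)+1 = m by omega, hR]

/-- For every `1 ≤ p ≤ m`, the form `Ω_(p)` is `h`-invariant:
for every `z ∈ h` and all `x₁,…,x_{2m−1} ∈ k`,
`∑ s, Ω_(p)(x₁,…,⁅z,x_s⁆,…,x_{2m−1}) = 0`. -/
theorem OmegaP_h_invariant
    {g : Type*} [LieRing g] [LieAlgebra ℝ g] [FiniteDimensional ℝ g]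
    (h : LieSubalgebra ℝ g) (k : Submodule ℝ g)
    (hcompl : IsCompl h.toSubmodule k)
    (hred : ∀ z ∈ h, ∀ x ∈ k, ⁅z, x⁆ ∈ k)
    (πh πk : g →ₗ[ℝ] g)
    (hsum : ∀ x : g, πh x + πk x = x)
    (hπh_mem : ∀ x : g, πh x ∈ h) (hπk_mem : ∀ x : g, πk x ∈ k)
    (hπh_id : ∀ x ∈ h, πh x = x) (hπk_id : ∀ x ∈ k, πk x = x)
    (m : ℕ) (hm : 1 ≤ m)
    (K : MultilinearMap ℝ (fun _ : Fin m => g) ℝ)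
    (hKsymm : ∀ (v : Fin m → g) (σ : Equiv.Perm (Fin m)), K (v ∘ σ) = K v)
    (hKinv : ∀ (y : g) (v : Fin m → g),
      ∑ s, K (Function.update v s ⁅y, v s⁆) = 0)
    (p : ℕ) (hp1 : 1 ≤ p) (hpm : p ≤ m)
    (z : g) (hz : z ∈ h)
    (x : Fin (2*m-1) → g) (hx : ∀ i, x i ∈ k) :
    ∑ s : Fin (2*m-1), OmegaP m p hm πh K (Function.update x s ⁅z, x s⁆) = 0 := by
  classical
  have hπh_k0 : ∀ a ∈ k, πh a = 0 := by
    intro a ha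
    have h1 := hsum a
    rw [hπk_id a ha] at h1
    have h2 : πh a + a = 0 + a := by rw [h1, zero_add]
    exact add_right_cancel h2
  have hcomm : ∀ a : g, πh ⁅z, a⁆ = ⁅z, πh a⁆ := by
    intro a
    have ha : a = πh a + πk a := (hsum a).symm
    calc πh ⁅z, a⁆ = πh ⁅z, πh a⁆ + πh ⁅z, πk a⁆ := by
          conv_lhs => rw [ha]
          rw [lie_add, map_add]
      _ = ⁅z, πh a⁆ := by
          rw [hπh_id _ (h.lie_mem hz (hπh_mem a)),
            hπh_k0 _ (hred z hz (πk a) (hπk_mem a)), add_zero]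
  unfold OmegaP
  rw [Finset.sum_comm]
  refine Finset.sum_eq_zero fun σ _ => ?_
  rw [← Finset.mul_sum]
  have inner : ∑ s : Fin (2*m-1),
      K (omegaArg m p hm πh (Function.update x s ⁅z, x s⁆) σ) = 0 := by
    have hrw : ∀ (s : Fin (2*m-1)) (v : g),
        omegaArg m p hm πh (Function.update x s v) σ
          = argA m p hm πh (Function.update (x ∘ σ) (σ.symm s) v) := by
      intro s v
      have h0 : omegaArg m p hm πh (Function.update x s v) σ
          = argA m p hm πh ((Function.update x s v) ∘ σ) := rfl
      rw [h0, Function.update_comp_equiv]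
    calc ∑ s : Fin (2*m-1), K (omegaArg m p hm πh (Function.update x s ⁅z, x s⁆) σ)
        = ∑ s : Fin (2*m-1),
            K (argA m p hm πh (Function.update (x ∘ σ) (σ.symm s) ⁅z, (x ∘ σ) (σ.symm s)⁆)) := by
          refine Finset.sum_congr rfl fun s _ => ?_
          rw [hrw]
          congr 2
          simp [Function.comp]
      _ = ∑ t : Fin (2*m-1),
            K (argA m p hm πh (Function.update (x ∘ σ) t ⁅z, (x ∘ σ) t⁆)) :=
          Equiv.sum_comp σ.symm
            (fun t => K (argA m p hm πh (Function.update (x ∘ σ) t ⁅z, (x ∘ σ) t⁆)))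
      _ = 0 := key_sum m p hm πh K hKinv z hcomm (x ∘ σ)
  rw [inner, mul_zero]
end

section
/- Let g be a finite-dimensional real Lie algebra, m ≥ 1 an integer, and K : g^m → ℝ a symmetric invariant m-multilinear form. Then the full antisymmetrization of K applied to m brackets vanishes: for all x_1, …, x_{2m} ∈ g, ∑_{σ ∈ S_{2m}} sgn(σ) K(⁅x_{σ(1)}, x_{σ(2)}⁆, ⁅x_{σ(3)}, x_{σ(4)}⁆, …, ⁅x_{σ(2m−1)}, x_{σ(2m)}⁆) = 0 (i.e. the form Π_(0) vanishes identically as a consequence of the g-invariance of K). -/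
/-!
Fix `σ` and put `a = x_{σ(1)}`. Invariance of `K` under `ad a`, applied to the tuple
`(x_{σ(2)}, ⁅x_{σ(3)}, x_{σ(4)}⁆, …)`, replaces the first bracket `⁅a, x_{σ(2)}⁆` by minus the
sum over `s ≥ 2` of the terms in which the `s`-th bracket `b = ⁅x_{σ(2s-1)}, x_{σ(2s)}⁆` becomes
`⁅a, b⁆`. Each of these vanishes after antisymmetrization: cycling the three arguments is an even
permutation, so three times the antisymmetrized term is the antisymmetrization of a Jacobi sum,
which is zero.
-/

open Equiv Finset Function

section Antisymmetrize

variable {ι M N : Type*} [Fintype ι] [DecidableEq ι] [AddCommGroup N]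

def antisymmetrize : ((ι → M) → N) →+ ((ι → M) → N) where
  toFun F x := ∑ σ : Perm ι, Perm.sign σ • F (x ∘ σ)
  map_zero' := by ext; simp
  map_add' F G := by ext; simp [sum_add_distrib]

theorem antisymmetrize_apply (F : (ι → M) → N) (x : ι → M) :
    antisymmetrize F x = ∑ σ : Perm ι, Perm.sign σ • F (x ∘ σ) := rfl

theorem antisymmetrize_comp_perm (F : (ι → M) → N) (π : Perm ι) (x : ι → M) :
    antisymmetrize (fun y => F (y ∘ π)) x = Perm.sign π • antisymmetrize F x := by
  rw [antisymmetrize_apply, antisymmetrize_apply, smul_sum]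
  conv_rhs => rw [← Equiv.sum_comp (Equiv.mulRight π)]
  refine sum_congr rfl fun σ _ => ?_
  rw [coe_mulRight, Perm.sign_mul, smul_smul, mul_left_comm, Int.units_mul_self, mul_one]
  rfl

end Antisymmetrize

theorem antisymmetrize_lie_lie_eq_zero {ι L N : Type*} [Fintype ι] [DecidableEq ι] [LieRing L]
    [AddCommGroup N] [IsAddTorsionFree N] {p q r : ι} (hpq : p ≠ q) (hqr : q ≠ r) (hpr : p ≠ r)
    (B : (ι → L) → L →+ N)
    (hB : ∀ y y' : ι → L, (∀ i, i ≠ p → i ≠ q → i ≠ r → y i = y' i) → B y = B y')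
    (x : ι → L) :
    antisymmetrize (fun y => B y ⁅y p, ⁅y q, y r⁆⁆) x = 0 := by
  set H : (ι → L) → N := fun y => B y ⁅y p, ⁅y q, y r⁆⁆
  set c : Perm ι := swap p q * swap q r
  have hc_fix : ∀ i, i ≠ p → i ≠ q → i ≠ r → c i = i := fun i hp hq hr => by
    simp [c, swap_apply_of_ne_of_ne, hp, hq, hr]
  have hc : c p = q ∧ c q = r ∧ c r = p := by
    simp [c, swap_apply_of_ne_of_ne, hpq, hpr, hpr.symm, hqr.symm]
  have hsign : Perm.sign c = 1 := by
    simp [c, Perm.sign_swap hpq, Perm.sign_swap hqr]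
  have hB_c : ∀ y, B (y ∘ c) = B y := fun y => hB _ _ fun i hp hq hr => by
    simp [hc_fix i hp hq hr]
  have hjacobi : ∀ y, H y + H (y ∘ c) + H ((y ∘ c) ∘ c) = 0 := fun y => by
    simp only [H, hB_c (y ∘ c), hB_c, comp_apply, hc, ← map_add, lie_jacobi, map_zero]
  have hH_c : ∀ F : (ι → L) → N, antisymmetrize (fun y => F (y ∘ c)) = antisymmetrize F :=
    fun F => funext fun x => by rw [antisymmetrize_comp_perm, hsign, one_smul]
  have h3 : 3 • antisymmetrize H x = 0 := calc
    3 • antisymmetrize H x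
      = antisymmetrize (H + (fun y => H (y ∘ c)) + fun y => H ((y ∘ c) ∘ c)) x := by
      rw [map_add, map_add, hH_c (fun y => H (y ∘ c)), hH_c]
      simp only [Pi.add_apply, succ_nsmul, zero_smul, zero_add]
    _ = 0 := by
      rw [show H + (fun y => H (y ∘ c)) + (fun y => H ((y ∘ c) ∘ c)) = 0 from funext hjacobi,
        map_zero, Pi.zero_apply]
  exact (nsmul_eq_zero_iff_right three_ne_zero).mp h3

theorem MultilinearMap.toLinearMap_congr {R ι N : Type*} {M : ι → Type*} [Semiring R]
    [DecidableEq ι] [∀ i, AddCommMonoid (M i)] [∀ i, Module R (M i)] [AddCommMonoid N]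
    [Module R N] (K : MultilinearMap R M N) {v v' : ∀ i, M i} {i : ι}
    (h : ∀ j, j ≠ i → v j = v' j) : K.toLinearMap v i = K.toLinearMap v' i := by
  ext a
  simp only [toLinearMap_apply]
  congr 1
  funext j
  rcases eq_or_ne j i with rfl | hj
  · simp
  · simp [hj, h j hj]

section BracketPairs

variable {m : ℕ}

def pairFst (i : Fin m) : Fin (2 * m) := ⟨2 * i, by omega⟩

def pairSnd (i : Fin m) : Fin (2 * m) := ⟨2 * i + 1, by omega⟩

@[simp] theorem pairFst_inj {i j : Fin m} : pairFst i = pairFst j ↔ i = j := by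
  simp [pairFst, Fin.ext_iff]

@[simp] theorem pairSnd_inj {i j : Fin m} : pairSnd i = pairSnd j ↔ i = j := by
  simp [pairSnd, Fin.ext_iff]

@[simp] theorem pairFst_ne_pairSnd (i j : Fin m) : pairFst i ≠ pairSnd j := by
  simp [pairFst, pairSnd, Fin.ext_iff]; omega

@[simp] theorem pairSnd_ne_pairFst (i j : Fin m) : pairSnd i ≠ pairFst j :=
  (pairFst_ne_pairSnd j i).symm

variable {R L N : Type*} [Semiring R] [LieRing L] [Module R L] [AddCommGroup N] [Module R N]

def bracketPairs (y : Fin (2 * m) → L) : Fin m → L := fun i => ⁅y (pairFst i), y (pairSnd i)⁆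

theorem map_bracketPairs_eq_neg_sum [NeZero m] (K : MultilinearMap R (fun _ : Fin m => L) N)
    (hK : ∀ (a : L) (v : Fin m → L), ∑ s, K (update v s ⁅a, v s⁆) = 0) (y : Fin (2 * m) → L) :
    K (bracketPairs y) = -∑ s ∈ univ.erase 0,
      K.toLinearMap (update (bracketPairs y) 0 (y (pairSnd 0))) s
        ⁅y (pairFst 0), ⁅y (pairFst s), y (pairSnd s)⁆⁆ := by
  set w := update (bracketPairs y) 0 (y (pairSnd 0))
  have h := hK (y (pairFst 0)) w
  rw [← sum_erase_add _ _ (mem_univ 0)] at h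
  have h0 : update w 0 ⁅y (pairFst 0), w 0⁆ = bracketPairs y := by
    simp only [w, update_self, update_idem]
    exact update_eq_self _ _
  have hs : ∀ s ∈ univ.erase (0 : Fin m), w s = ⁅y (pairFst s), y (pairSnd s)⁆ :=
    fun s hs => update_of_ne (ne_of_mem_erase hs) _ _
  rw [h0, sum_congr rfl fun s hs' => by rw [hs s hs']] at h
  simp only [MultilinearMap.toLinearMap_apply]
  exact eq_neg_of_add_eq_zero_right h

end BracketPairs

theorem antisymmetrize_map_bracketPairs_eq_zero {R L N : Type*} [Semiring R] [LieRing L]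
    [Module R L] [AddCommGroup N] [Module R N] [IsAddTorsionFree N] {m : ℕ} [NeZero m]
    (K : MultilinearMap R (fun _ : Fin m => L) N)
    (hK : ∀ (a : L) (v : Fin m → L), ∑ s, K (update v s ⁅a, v s⁆) = 0) (x : Fin (2 * m) → L) :
    antisymmetrize (fun y => K (bracketPairs y)) x = 0 := by
  set B : Fin m → (Fin (2 * m) → L) → L →+ N := fun s y =>
    (K.toLinearMap (update (bracketPairs y) 0 (y (pairSnd 0))) s).toAddMonoidHom
  have hB : ∀ s ≠ 0, ∀ y y' : Fin (2 * m) → L, (∀ i, i ≠ pairFst 0 → i ≠ pairFst s →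
      i ≠ pairSnd s → y i = y' i) → B s y = B s y' := fun s hs y y' h => by
    refine congrArg LinearMap.toAddMonoidHom (K.toLinearMap_congr fun j hj => ?_)
    rcases eq_or_ne j 0 with rfl | hj0
    · simpa using h _ (by simp) (by simp) (pairSnd_inj.not.mpr hj)
    · simp [hj0, bracketPairs, h (pairFst j), h (pairSnd j), hj]
  have hsum : (fun y => K (bracketPairs y)) =
      -∑ s ∈ univ.erase 0, fun y => B s y ⁅y (pairFst 0), ⁅y (pairFst s), y (pairSnd s)⁆⁆ := by
    ext y
    simp [map_bracketPairs_eq_neg_sum K hK y, B]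
  rw [hsum, map_neg, map_sum, Pi.neg_apply, Finset.sum_apply, neg_eq_zero]
  refine sum_eq_zero fun s hs => ?_
  have hs0 : s ≠ 0 := ne_of_mem_erase hs
  exact antisymmetrize_lie_lie_eq_zero (by simp [Ne.symm hs0]) (by simp) (by simp) (B s) (hB s hs0) x

/-- Let `g` be a finite-dimensional real Lie algebra, `m ≥ 1`
and `K : g^m → ℝ` a symmetric invariant multilinear form.  Then the full
antisymmetrization of `K` applied to `m` brackets vanishes:
`∑_{σ ∈ S_{2m}} sgn(σ) K(⁅x_{σ(1)},x_{σ(2)}⁆, …, ⁅x_{σ(2m−1)},x_{σ(2m)}⁆) = 0`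
for all `x₁,…,x_{2m} ∈ g`. -/
theorem antisymmetrized_brackets_vanish
    {g : Type*} [LieRing g] [LieAlgebra ℝ g]
    (m : ℕ) (hm : 1 ≤ m)
    (K : MultilinearMap ℝ (fun _ : Fin m => g) ℝ)
    (hKinv : ∀ (y : g) (v : Fin m → g),
      ∑ s, K (Function.update v s ⁅y, v s⁆) = 0)
    (x : Fin (2*m) → g) :
    ∑ σ : Equiv.Perm (Fin (2*m)),
      ((Equiv.Perm.sign σ : ℤ) : ℝ) *
        K (fun i : Fin m =>
          ⁅x (σ ⟨2*(i : ℕ), by have := i.isLt; omega⟩),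
           x (σ ⟨2*(i : ℕ)+1, by have := i.isLt; omega⟩)⁆) = 0 := by
  have : NeZero m := ⟨by omega⟩
  refine Eq.trans (sum_congr rfl fun σ _ => ?_) (antisymmetrize_map_bracketPairs_eq_zero K hKinv x)
  rw [Units.smul_def, zsmul_eq_mul]
  rfl
end

section
/- Suppose in addition that ⁅k, k⁆ ⊆ h (i.e. the decomposition is symmetric). Then for all 1 ≤ p ≤ m the forms Ω_(p) coincide: Ω_(p) = Ω_(m), where Ω_(m)(x_1, …, x_{2m−1}) = ∑_{σ ∈ S_{2m−1}} sgn(σ) K(π_h⁅x_{σ(1)}, x_{σ(2)}⁆, …, π_h⁅x_{σ(2m−3)}, x_{σ(2m−2)}⁆, x_{σ(2m−1)}); consequently Ω̄ = ∑_{s=1}^m α_m(s)·Ω_(s) equals (∑_{s=1}^m α_m(s))·Ω_(m). -/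
open Finset

/-- The coefficient `α_m(s) = ∏_{r=1}^{s-1} (2m−r)/r` (with `α_m(1) = 1`). -/
noncomputable def alphaCoef (m s : ℕ) : ℝ :=
  ∏ r ∈ Finset.Icc 1 (s-1), ((2*m : ℝ) - r) / r

/-- If moreover `⁅k, k⁆ ⊆ h` (the decomposition is
*symmetric*), then all the forms `Ω_(p)` (for `1 ≤ p ≤ m`) coincide with
`Ω_(m)` on tuples in `k`, and consequently
`Ω̄ = ∑_{s=1}^m α_m(s)·Ω_(s) = (∑_{s=1}^m α_m(s))·Ω_(m)`. -/
theorem OmegaP_symmetric_coset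
    {g : Type*} [LieRing g] [LieAlgebra ℝ g] [FiniteDimensional ℝ g]
    (h : LieSubalgebra ℝ g) (k : Submodule ℝ g)
    (hcompl : IsCompl h.toSubmodule k)
    (hred : ∀ z ∈ h, ∀ x ∈ k, ⁅z, x⁆ ∈ k)
    (πh πk : g →ₗ[ℝ] g)
    (hsum : ∀ x : g, πh x + πk x = x)
    (hπh_mem : ∀ x : g, πh x ∈ h) (hπk_mem : ∀ x : g, πk x ∈ k)
    (hπh_id : ∀ x ∈ h, πh x = x) (hπk_id : ∀ x ∈ k, πk x = x)
    (m : ℕ) (hm : 1 ≤ m)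
    (K : MultilinearMap ℝ (fun _ : Fin m => g) ℝ)
    (hKsymm : ∀ (v : Fin m → g) (σ : Equiv.Perm (Fin m)), K (v ∘ σ) = K v)
    (hKinv : ∀ (y : g) (v : Fin m → g),
      ∑ s, K (Function.update v s ⁅y, v s⁆) = 0)
    (hsymco : ∀ x ∈ k, ∀ y ∈ k, ⁅x, y⁆ ∈ h) :
    (∀ p, 1 ≤ p → p ≤ m → ∀ x : Fin (2*m-1) → g, (∀ i, x i ∈ k) →
      OmegaP m p hm πh K x = OmegaP m m hm πh K x) ∧
    (∀ x : Fin (2*m-1) → g, (∀ i, x i ∈ k) →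
      ∑ s ∈ Finset.Icc 1 m, alphaCoef m s * OmegaP m s hm πh K x
        = (∑ s ∈ Finset.Icc 1 m, alphaCoef m s) * OmegaP m m hm πh K x) := by
  have key : ∀ p, ∀ x : Fin (2*m-1) → g, (∀ i, x i ∈ k) →
      OmegaP m p hm πh K x = OmegaP m m hm πh K x := by
    intro p x hx
    unfold OmegaP
    refine Finset.sum_congr rfl fun σ _ => ?_
    congr 1
    apply congrArg
    funext i
    unfold omegaArg
    split
    · rename_i hi
      have hb : ∀ a b : Fin (2*m-1), πh ⁅x a, x b⁆ = ⁅x a, x b⁆ :=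
        fun a b => hπh_id _ (hsymco _ (hx a) _ (hx b))
      have hpm : (i : ℕ) < m - 1 := hi
      split
      · rfl
      · rw [hb]
    · rfl
  refine ⟨fun p _ _ x hx => key p x hx, fun x hx => ?_⟩
  rw [Finset.sum_mul]
  exact Finset.sum_congr rfl fun s _ => by rw [key s x hx]
end
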